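/- For a Bratteli diagram Br with potential F and β ∈ ℝ, define the left stochastic matrices \underline{Br(β)}^{(j)} over Br_{j-1} × Br_j by \underline{Br(β)}^{(j)}_{v,w} = (Σ_{μ ∈ P^w_j(v)} e^{−βF(μ)}) / (Σ_{ν ∈ P^w_j} e^{−βF(ν)}). Then as β → ∞, \underline{Br(β)}^{(j)} converges entrywise to the matrix \underline{Br}^{(j)} with entries \underline{Br}^{(j)}_{v,w} = #{μ ∈ P^w_j(v) : F(μ) = m_w} / #{μ ∈ P^w_j : F(μ) = m_w}, where m_w = min{F(μ) : μ ∈ P^w_j}. -/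

import Mathlib

open scoped BigOperators

/-- A Bratteli diagram: finite nonempty level sets `V n`, arrows `E n` from level `n`
to level `n+1`, a single root at level `0`, no sinks, and no sources besides the root. -/
structure Bratteli where
  V : ℕ → Type
  E : ℕ → Type
  instVFin : ∀ n, Fintype (V n)
  instEFin : ∀ n, Fintype (E n)
  instVNe : ∀ n, Nonempty (V n)
  instRoot : Subsingleton (V 0)
  src : ∀ n, E n → V n
  rng : ∀ n, E n → V (n + 1)
  noSink : ∀ n (v : V n), ∃ e : E n, src n e = v
  noSource : ∀ n (v : V (n + 1)), ∃ e : E n, rng n e = v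

attribute [instance] Bratteli.instVFin Bratteli.instEFin Bratteli.instVNe Bratteli.instRoot

/-- Finite paths of length `n` starting at the root. -/
abbrev Bratteli.FinPath (B : Bratteli) (n : ℕ) :=
  { p : ∀ i : Fin n, B.E i.val //
    ∀ (i : ℕ) (h : i + 1 < n),
      B.rng i (p ⟨i, Nat.lt_of_succ_lt h⟩) = B.src (i + 1) (p ⟨i + 1, h⟩) }

/-- Infinite paths starting at the root. -/
structure Bratteli.InfPath (B : Bratteli) where
  arrow : ∀ n, B.E n
  compat : ∀ n, B.rng n (arrow n) = B.src (n + 1) (arrow (n + 1))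

/-- The initial segment `p[1,n]` of an infinite path. -/
def Bratteli.InfPath.take {B : Bratteli} (p : B.InfPath) (n : ℕ) : B.FinPath n :=
  ⟨fun i => p.arrow i.val, fun i _ => p.compat i⟩

/-- The endpoint (range) of a finite path of positive length. -/
def pend {B : Bratteli} {n : ℕ} (μ : B.FinPath (n + 1)) : B.V (n + 1) :=
  B.rng n (μ.1 ⟨n, Nat.lt_succ_self n⟩)

/-- The vertex at level `n` through which a path of length `n+1` passes. -/
def through {B : Bratteli} {n : ℕ} (μ : B.FinPath (n + 1)) : B.V n :=
  B.src n (μ.1 ⟨n, Nat.lt_succ_self n⟩)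

/-- The value `F(μ) = Σ_i F(a_i)` of a potential on a finite path. -/
noncomputable def pathVal {B : Bratteli} (F : ∀ n, B.E n → ℝ) {n : ℕ}
    (μ : B.FinPath n) : ℝ :=
  ∑ i : Fin n, F i.val (μ.1 i)

/-- An infinite path `p` from the root is an `F`-geodesic when for every `n`,
`F(p[1,n]) ≤ F(μ)` for every length-`n` path `μ` from the root with the same endpoint. -/
def IsGeodesic {B : Bratteli} (F : ∀ n, B.E n → ℝ) (p : B.InfPath) : Prop :=
  ∀ (n : ℕ) (μ : B.FinPath (n + 1)), pend μ = pend (p.take (n + 1)) →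
    pathVal F (p.take (n + 1)) ≤ pathVal F μ

open scoped Classical

/-- The left stochastic matrix `Br(β)^{(j)}` with entries
`(Σ_{μ ∈ P^w(v)} e^{−βF(μ)}) / (Σ_{ν ∈ P^w} e^{−βF(ν)})`, over paths of length `j+1`
from the root (so from level `j` to level `j+1` in the diagram). -/
noncomputable def stoch (B : Bratteli) (F : ∀ n, B.E n → ℝ) (β : ℝ) (j : ℕ) :
    Matrix (B.V j) (B.V (j + 1)) ℝ :=
  Matrix.of fun v w =>
    (∑ μ : {μ : B.FinPath (j + 1) // pend μ = w ∧ through μ = v},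
        Real.exp (-(β * pathVal F μ.1))) /
      ∑ μ : {μ : B.FinPath (j + 1) // pend μ = w}, Real.exp (-(β * pathVal F μ.1))

/-- The minimum `m_w` of the potential over paths from the root to `w`. -/
noncomputable def mmin (B : Bratteli) (F : ∀ n, B.E n → ℝ) (j : ℕ) (w : B.V (j + 1)) : ℝ :=
  sInf {x | ∃ μ : B.FinPath (j + 1), pend μ = w ∧ pathVal F μ = x}

/-- The limit matrix `\underline{Br}^{(j)}` with entries
`#{μ ∈ P^w(v) : F(μ) = m_w} / #{μ ∈ P^w : F(μ) = m_w}`. -/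
noncomputable def stochLim (B : Bratteli) (F : ∀ n, B.E n → ℝ) (j : ℕ) :
    Matrix (B.V j) (B.V (j + 1)) ℝ :=
  Matrix.of fun v w =>
    (Nat.card {μ : B.FinPath (j + 1) //
        pend μ = w ∧ through μ = v ∧ pathVal F μ = mmin B F j w} : ℝ) /
      (Nat.card {μ : B.FinPath (j + 1) // pend μ = w ∧ pathVal F μ = mmin B F j w} : ℝ)

/-! Dividing numerator and denominator by `e^{-β m_w}` turns every weight into
`e^{-β (F(μ) - m_w)}`, which tends to `1` on minimizing paths and to `0` on the others. The
denominator's limit is positive because `m_w` is attained: every vertex is reachable from the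
root. -/

open Filter Topology

section ZeroTemperature

theorem sum_exp_neg_mul_eq_exp_mul_sum {ι : Type*} (s : Finset ι) (f : ι → ℝ) (m β : ℝ) :
    ∑ i ∈ s, Real.exp (-(β * f i)) =
      Real.exp (-(β * m)) * ∑ i ∈ s, Real.exp (-(β * (f i - m))) := by
  rw [Finset.mul_sum]
  refine Finset.sum_congr rfl fun i _ => ?_
  rw [← Real.exp_add]
  ring_nf

variable {ι : Type*} [Fintype ι]

theorem tendsto_sum_exp_neg_mul_sub_min (f : ι → ℝ) {m : ℝ} (hm : ∀ i, m ≤ f i) :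
    Tendsto (fun β : ℝ => ∑ i, Real.exp (-(β * (f i - m)))) atTop
      (𝓝 (Nat.card {i // f i = m})) := by
  have hterm : ∀ i, Tendsto (fun β : ℝ => Real.exp (-(β * (f i - m)))) atTop
      (𝓝 (if f i = m then 1 else 0)) := by
    intro i
    split_ifs with hi
    · simp [hi]
    · have hpos : 0 < f i - m := sub_pos.2 ((hm i).lt_of_ne' hi)
      exact Real.tendsto_exp_atBot.comp
        (tendsto_neg_atTop_atBot.comp (tendsto_id.atTop_mul_const hpos))
  convert tendsto_finsetSum _ fun i _ => hterm i
  rw [Finset.sum_boole, Nat.card_eq_fintype_card, Fintype.card_subtype]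

theorem tendsto_sum_exp_neg_mul_div_sum_exp_neg_mul (f : ι → ℝ) {p q : ι → Prop}
    [DecidablePred p] [DecidablePred q] {m : ℝ}
    (hpq : ∀ i, p i → q i) (hm : ∀ i, q i → m ≤ f i) (hmin : ∃ i, q i ∧ f i = m) :
    Tendsto (fun β : ℝ => (∑ i : {i // p i}, Real.exp (-(β * f i))) /
        ∑ i : {i // q i}, Real.exp (-(β * f i))) atTop
      (𝓝 (Nat.card {i // p i ∧ f i = m} / Nat.card {i // q i ∧ f i = m})) := by
  have hcard (r : ι → Prop) :
      Nat.card {i : {i // r i} // f i = m} = Nat.card {i // r i ∧ f i = m} :=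
    Nat.card_congr (Equiv.subtypeSubtypeEquivSubtypeInter r (f · = m))
  have hnum :=
    tendsto_sum_exp_neg_mul_sub_min (fun i : {i // p i} => f i) fun i => hm i (hpq i i.2)
  have hden := tendsto_sum_exp_neg_mul_sub_min (fun i : {i // q i} => f i) fun i => hm i i.2
  rw [hcard] at hnum hden
  have hden_pos : 0 < Nat.card {i // q i ∧ f i = m} := by
    obtain ⟨i, hi⟩ := hmin
    exact Nat.card_pos_iff.2 ⟨⟨⟨i, hi⟩⟩, inferInstance⟩
  refine (hnum.div hden (by positivity)).congr fun β => ?_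
  rw [sum_exp_neg_mul_eq_exp_mul_sum _ (fun i : {i // p i} => f i) m β,
    sum_exp_neg_mul_eq_exp_mul_sum _ (fun i : {i // q i} => f i) m β,
    mul_div_mul_left _ _ (Real.exp_ne_zero _), Pi.div_apply]

end ZeroTemperature

namespace Bratteli

variable {B : Bratteli}

def FinPath.single (e : B.E 0) : B.FinPath 1 :=
  ⟨fun i => Fin.cases e finZeroElim i, fun _ h => absurd h (by omega)⟩

def FinPath.snoc {n : ℕ} (μ : B.FinPath (n + 1)) (e : B.E (n + 1))
    (he : pend μ = B.src (n + 1) e) : B.FinPath (n + 2) :=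
  ⟨Fin.lastCases (motive := fun i => B.E i.val) e fun i => μ.1 i, by
    intro i hi
    have hcast (k : ℕ) (hk : k < n + 1) :
        (Fin.lastCases (motive := fun i => B.E i.val) e (fun i => μ.1 i) ⟨k, by omega⟩ :
          B.E k) = μ.1 ⟨k, hk⟩ :=
      Fin.lastCases_castSucc (i := ⟨k, hk⟩) ..
    rcases Nat.lt_succ_iff_lt_or_eq.1 (Nat.succ_lt_succ_iff.1 hi) with hi | rfl
    · rw [hcast i (by omega), hcast (i + 1) (by omega)]
      exact μ.2 i (by omega)
    · rw [hcast i (by omega)]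
      exact he.trans <|
        congrArg (B.src (i + 1)) (Fin.lastCases_last (motive := fun i => B.E i.val) ..).symm⟩

theorem FinPath.pend_snoc {n : ℕ} (μ : B.FinPath (n + 1)) (e : B.E (n + 1))
    (he : pend μ = B.src (n + 1) e) : pend (μ.snoc e he) = B.rng (n + 1) e :=
  congrArg (B.rng (n + 1)) (Fin.lastCases_last (motive := fun i => B.E i.val) ..)

theorem exists_pend_eq : ∀ (n : ℕ) (w : B.V (n + 1)), ∃ μ : B.FinPath (n + 1), pend μ = w
  | 0, w => by
    obtain ⟨e, rfl⟩ := B.noSource 0 w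
    exact ⟨FinPath.single e, rfl⟩
  | n + 1, w => by
    obtain ⟨e, rfl⟩ := B.noSource (n + 1) w
    obtain ⟨μ, hμ⟩ := exists_pend_eq n (B.src (n + 1) e)
    exact ⟨μ.snoc e hμ, FinPath.pend_snoc μ e hμ⟩

end Bratteli

section Minimum

variable (B : Bratteli) (F : ∀ n, B.E n → ℝ) (j : ℕ) (w : B.V (j + 1))

theorem finite_pathVal_of_pend_eq :
    {x | ∃ μ : B.FinPath (j + 1), pend μ = w ∧ pathVal F μ = x}.Finite :=
  (Set.finite_range (pathVal F)).subset <| by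
    rintro _ ⟨μ, -, rfl⟩
    exact Set.mem_range_self μ

theorem mmin_le_pathVal {μ : B.FinPath (j + 1)} (hμ : pend μ = w) :
    mmin B F j w ≤ pathVal F μ :=
  csInf_le (finite_pathVal_of_pend_eq B F j w).bddBelow ⟨μ, hμ, rfl⟩

theorem exists_pathVal_eq_mmin :
    ∃ μ : B.FinPath (j + 1), pend μ = w ∧ pathVal F μ = mmin B F j w :=
  Set.Nonempty.csInf_mem (by
    obtain ⟨μ, hμ⟩ := Bratteli.exists_pend_eq j w
    exact ⟨_, μ, hμ, rfl⟩) (finite_pathVal_of_pend_eq B F j w)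

end Minimum

theorem stmt_7 (B : Bratteli) (F : ∀ n, B.E n → ℝ) (j : ℕ) (v : B.V j) (w : B.V (j + 1)) :
    Filter.Tendsto (fun β : ℝ => stoch B F β j v w) Filter.atTop
      (nhds (stochLim B F j v w)) := by
  have h := tendsto_sum_exp_neg_mul_div_sum_exp_neg_mul (pathVal F)
    (p := fun μ : B.FinPath (j + 1) => pend μ = w ∧ through μ = v) (q := fun μ => pend μ = w)
    (fun _ hμ => hμ.1) (fun _ hμ => mmin_le_pathVal B F j w hμ) (exists_pathVal_eq_mmin B F j w)
  simpa only [stoch, stochLim, Matrix.of_apply, and_assoc] using h
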